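/- In the rewrite game over {a,b} with rules a → ε, a^2 → ε, b → ε, write a word w uniquely as a^{i_0} b a^{i_1} b ⋯ b a^{i_k} and set S(w) = (2k + 2α_1 + α_2) mod 4, where α_r is the number of indices j with i_j ≡ r (mod 3). Then the Grundy value of w is 0, 1, 2, 3 according to whether S(w) = 0, 2, 1, 3 respectively. -/

import Mathlib

inductive AB | a | b
deriving DecidableEq

/-- One move of the game `{a → ε, a² → ε, b → ε}`. -/
def Step (w w' : List AB) : Prop :=
  ∃ x y : List AB, w' = x ++ y ∧
    (w = x ++ [AB.a] ++ y ∨ w = x ++ [AB.a, AB.a] ++ y ∨ w = x ++ [AB.b] ++ y)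

/-- The minimum excluded value of a set of naturals. -/
noncomputable def mex (S : Set ℕ) : ℕ := sInf {n | n ∉ S}

/-- `g` is the Grundy function of the game with moves `step`. -/
def IsGrundy (step : List AB → List AB → Prop) (g : List AB → ℕ) : Prop :=
  ∀ w, g w = mex (g '' {w' | step w w'})

/-- The lengths `i_0, …, i_k` of the (possibly empty) maximal blocks of `a`'s in
the decomposition `w = a^{i_0} b a^{i_1} b ⋯ b a^{i_k}`. -/
def blocks (w : List AB) : List ℕ := (w.splitOn AB.b).map List.length

/-- `α_r`: the number of blocks of `a`'s whose length is `≡ r (mod 3)`. -/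
def alpha (w : List AB) (r : ℕ) : ℕ := (blocks w).countP (fun i => i % 3 == r)

/-- `S(w) = (2k + 2α₁ + α₂) mod 4`, where `k = |w|_b`. -/
def S (w : List AB) : ℕ := (2 * w.count AB.b + 2 * alpha w 1 + alpha w 2) % 4

open AB

/-!
Read a word through its block lengths `i₀, …, i_k`. A move shortens one block by `1` or `2`, or
merges two adjacent blocks, and `S w` is (mod 4) a sum of weights of the blocks depending only on
`i_j mod 3`, plus a constant. A check on residues shows that every move changes `S`; when `S` is
odd some block is `≡ 2 (mod 3)`, and shortening it by `1` or `2` shifts `S` by `1` or `3`; when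
`S ∈ {2, 3}`, shortening a block `≡ 1` or merging the first two blocks shifts `S` by `2`. Hence
`S ↦ (0, 2, 1, 3)` satisfies the mex recursion, and by induction on the length it is the Grundy
function.
-/

lemma blocks_nil : blocks [] = [0] := rfl

lemma blocks_ne_nil (w : List AB) : blocks w ≠ [] := by
  simp [blocks]

lemma blocks_cons_a (w : List AB) : blocks (a :: w) = (blocks w).modifyHead (· + 1) := by
  obtain ⟨l, ls, h⟩ := List.exists_cons_of_ne_nil (List.splitOn_ne_nil b w)
  simp [blocks, List.splitOn_cons_eq_if_modifyHead, h]

lemma blocks_cons_b (w : List AB) : blocks (b :: w) = 0 :: blocks w := by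
  simp [blocks, List.splitOn_cons_eq_if_modifyHead]

lemma length_blocks (w : List AB) : (blocks w).length = w.count b + 1 := by
  induction w with
  | nil => rfl
  | cons c w ih => cases c <;> simp [blocks_cons_a, blocks_cons_b, ih]

lemma blocks_replicate_append (n : ℕ) (v : List AB) :
    blocks (List.replicate n a ++ v) = (blocks v).modifyHead (· + n) := by
  induction n with
  | zero => exact (congrFun List.modifyHead_id _).symm
  | succ n ih =>
    rw [List.replicate_succ, List.cons_append, blocks_cons_a, ih, List.modifyHead_modifyHead]
    rfl

lemma blocks_replicate_append_b (n : ℕ) (u : List AB) :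
    blocks (List.replicate n a ++ b :: u) = n :: blocks u := by
  simp [blocks_replicate_append, blocks_cons_b]

lemma exists_blocks_append (x : List AB) :
    ∃ p n, ∀ y, blocks (x ++ y) = p ++ (blocks y).modifyHead (n + ·) := by
  induction x with
  | nil => exact ⟨[], 0, fun y => by
    simp only [List.nil_append, Nat.zero_add]; exact (congrFun List.modifyHead_id _).symm⟩
  | cons c x ih =>
    obtain ⟨p, n, h⟩ := ih
    cases c with
    | a =>
      cases p with
      | nil =>
        refine ⟨[], n + 1, fun y => ?_⟩
        rw [List.cons_append, blocks_cons_a, h, List.nil_append, List.nil_append,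
          List.modifyHead_modifyHead]
        congr 1; funext m; simp only [Function.comp_apply]; omega
      | cons k p => exact ⟨(k + 1) :: p, n, fun y => by simp [blocks_cons_a, h]⟩
    | b => exact ⟨0 :: p, n, fun y => by simp [blocks_cons_b, h]⟩

lemma exists_eq_replicate_append {w : List AB} {n : ℕ} {L : List ℕ} (h : blocks w = n :: L) :
    ∃ v, w = List.replicate n a ++ v ∧ blocks v = 0 :: L := by
  induction w generalizing n with
  | nil => exact ⟨[], by simp_all [blocks_nil]⟩
  | cons c u ih =>
    cases c with
    | a =>
      obtain ⟨m, M, hu⟩ := List.exists_cons_of_ne_nil (blocks_ne_nil u)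
      rw [blocks_cons_a, hu, List.modifyHead_cons, List.cons.injEq] at h
      obtain ⟨rfl, rfl⟩ := h
      obtain ⟨v, rfl, hv⟩ := ih hu
      exact ⟨v, by simp [List.replicate_succ], hv⟩
    | b =>
      rw [blocks_cons_b, List.cons.injEq] at h
      obtain ⟨rfl, rfl⟩ := h
      exact ⟨b :: u, rfl, blocks_cons_b u⟩

lemma exists_eq_replicate_append_b {w : List AB} {n m : ℕ} {M : List ℕ}
    (h : blocks w = n :: m :: M) :
    ∃ u, w = List.replicate n a ++ b :: u ∧ blocks u = m :: M := by
  obtain ⟨v, rfl, hv⟩ := exists_eq_replicate_append h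
  match v, hv with
  | [], hv => simp [blocks_nil] at hv
  | a :: u, hv =>
    obtain ⟨k, K, hu⟩ := List.exists_cons_of_ne_nil (blocks_ne_nil u)
    simp [blocks_cons_a, hu] at hv
  | b :: u, hv => exact ⟨u, rfl, by simpa [blocks_cons_b] using hv⟩

inductive BlockMove : List ℕ → List ℕ → Prop
  | dropA (p q : List ℕ) (i : ℕ) : BlockMove (p ++ (i + 1) :: q) (p ++ i :: q)
  | dropAA (p q : List ℕ) (i : ℕ) : BlockMove (p ++ (i + 2) :: q) (p ++ i :: q)
  | dropB (p q : List ℕ) (i j : ℕ) : BlockMove (p ++ i :: j :: q) (p ++ (i + j) :: q)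

lemma Step.length_lt {w w' : List AB} (h : Step w w') : w'.length < w.length := by
  obtain ⟨x, y, rfl, rfl | rfl | rfl⟩ := h <;> simp

lemma Step.append_left {w w' : List AB} (z : List AB) (h : Step w w') : Step (z ++ w) (z ++ w') := by
  obtain ⟨x, y, rfl, h⟩ := h
  exact ⟨z ++ x, y, by simp, by rcases h with rfl | rfl | rfl <;> simp⟩

lemma Step.blockMove {w w' : List AB} (h : Step w w') : BlockMove (blocks w) (blocks w') := by
  obtain ⟨x, y, rfl, rfl | rfl | rfl⟩ := h <;>
  obtain ⟨p, n, hx⟩ := exists_blocks_append x <;>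
  obtain ⟨m, q, hy⟩ := List.exists_cons_of_ne_nil (blocks_ne_nil y) <;>
  simp only [List.append_assoc, List.cons_append, List.nil_append, hx,
    blocks_cons_a, blocks_cons_b, hy, List.modifyHead_cons]
  · exact BlockMove.dropA p q (n + m)
  · exact BlockMove.dropAA p q (n + m)
  · exact BlockMove.dropB p q n m

lemma exists_step_of_blocks_append {L L' : List ℕ} (hL : L ≠ [])
    (hmove : ∀ w, blocks w = L → ∃ w', Step w w' ∧ blocks w' = L') :
    ∀ (p : List ℕ) (w : List AB), blocks w = p ++ L → ∃ w', Step w w' ∧ blocks w' = p ++ L'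
  | [], w, h => hmove w h
  | n :: p, w, h => by
    obtain ⟨m, M, hpL⟩ := List.exists_cons_of_ne_nil (List.append_ne_nil_of_right_ne_nil p hL)
    rw [List.cons_append, hpL] at h
    obtain ⟨u, rfl, hu⟩ := exists_eq_replicate_append_b h
    obtain ⟨u', hstep, hu'⟩ := exists_step_of_blocks_append hL hmove p u (hu.trans hpL.symm)
    refine ⟨List.replicate n a ++ b :: u', ?_, by rw [blocks_replicate_append_b, hu']; rfl⟩
    simpa using hstep.append_left (List.replicate n a ++ [b])

lemma exists_step_drop_replicate {w : List AB} {q : List ℕ} {i d : ℕ} (hd : d = 1 ∨ d = 2)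
    (h : blocks w = (i + d) :: q) : ∃ w', Step w w' ∧ blocks w' = i :: q := by
  obtain ⟨v, rfl, hv⟩ := exists_eq_replicate_append h
  refine ⟨List.replicate i a ++ v, ⟨[], List.replicate i a ++ v, rfl, ?_⟩, ?_⟩
  · rcases hd with rfl | rfl <;> simp [List.replicate_succ]
  · simp [blocks_replicate_append, hv]

lemma BlockMove.exists_step {w : List AB} {L' : List ℕ} (h : BlockMove (blocks w) L') :
    ∃ w', Step w w' ∧ blocks w' = L' := by
  generalize hw : blocks w = L at h
  cases h with
  | dropA p q i =>
    exact exists_step_of_blocks_append (List.cons_ne_nil _ _)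
      (fun _ => exists_step_drop_replicate (.inl rfl)) p w hw
  | dropAA p q i =>
    exact exists_step_of_blocks_append (List.cons_ne_nil _ _)
      (fun _ => exists_step_drop_replicate (.inr rfl)) p w hw
  | dropB p q i j =>
    refine exists_step_of_blocks_append (List.cons_ne_nil _ _) (fun v hv => ?_) p w hw
    obtain ⟨u, rfl, hu⟩ := exists_eq_replicate_append_b hv
    refine ⟨List.replicate i a ++ u, ⟨List.replicate i a, u, rfl, by simp⟩, ?_⟩
    simp [blocks_replicate_append, hu, Nat.add_comm]

/-- `weight r = 2 + 2 [r = 1] + [r = 2]`: a block of length `≡ r` contributes to `α₁, α₂` and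
brings the `b` in front of it; the first block has none, whence the `+ 2 = - 2` in `value`. -/
def weight (r : ZMod 3) : ZMod 4 := ![2, 0, 3] r

def value (L : List ℕ) : ZMod 4 := (L.map fun i : ℕ => weight i).sum + 2

lemma value_cons (i : ℕ) (L : List ℕ) : value (i :: L) = weight i + value L := by
  simp [value, add_assoc]

lemma value_append_cons (p q : List ℕ) (i : ℕ) :
    value (p ++ i :: q) = weight i + value (p ++ q) := by
  simp only [value, List.map_append, List.map_cons, List.sum_append, List.sum_cons]
  ring

lemma sum_weight (L : List ℕ) : (L.map fun i : ℕ => weight i).sum =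
    2 * L.length + 2 * (L.countP fun i => i % 3 == 1) + (L.countP fun i => i % 3 == 2) := by
  induction L with
  | nil => simp
  | cons i L ih =>
    simp only [List.map_cons, List.sum_cons, ih, List.length_cons, List.countP_cons]
    rw [← ZMod.natCast_mod i 3]
    have hw : weight 0 = 2 ∧ weight 1 = 4 ∧ weight 2 = 3 := by decide
    have : i % 3 < 3 := Nat.mod_lt _ (by norm_num)
    interval_cases i % 3 <;>
    · simp only [Nat.cast_zero, Nat.cast_one, Nat.cast_ofNat, Nat.cast_add, hw, BEq.rfl,
        Nat.reduceBEq, Bool.false_eq_true, ↓reduceIte, add_zero]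
      ring

lemma natCast_S (w : List AB) : (S w : ZMod 4) = value (blocks w) := by
  have h4 : (4 : ZMod 4) = 0 := rfl
  rw [S, ZMod.natCast_mod, value, sum_weight, length_blocks]
  simp only [alpha]
  push_cast
  linear_combination -h4

lemma BlockMove.value_ne {L L' : List ℕ} (h : BlockMove L L') : value L' ≠ value L := by
  cases h with
  | dropA p q i =>
    rw [value_append_cons, value_append_cons, Nat.cast_succ, Ne, add_left_inj]
    generalize (i : ZMod 3) = r
    revert r; decide
  | dropAA p q i =>
    rw [value_append_cons, value_append_cons, Nat.cast_add, Ne, add_left_inj]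
    generalize (i : ZMod 3) = r
    revert r; decide
  | dropB p q i j =>
    rw [value_append_cons, value_append_cons, value_append_cons, Nat.cast_add, ← add_assoc, Ne,
      add_left_inj]
    generalize (i : ZMod 3) = r; generalize (j : ZMod 3) = s
    revert r s; decide

lemma value_eq_zero_or_two {L : List ℕ} (h : ∀ i ∈ L, (i : ZMod 3) ≠ 2) :
    value L = 0 ∨ value L = 2 := by
  induction L with
  | nil => exact .inr rfl
  | cons i L ih =>
    have key : ∀ r : ZMod 3, r ≠ 2 → ∀ v : ZMod 4, v = 0 ∨ v = 2 →
        weight r + v = 0 ∨ weight r + v = 2 := by decide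
    rw [value_cons]
    exact key _ (h i (by simp)) _ (ih fun j hj => h j (by simp [hj]))

lemma exists_blockMove_value_add_of_odd {L : List ℕ} (h : value L = 1 ∨ value L = 3) :
    (∃ L', BlockMove L L' ∧ value L' = value L + 1) ∧
      ∃ L', BlockMove L L' ∧ value L' = value L + 3 := by
  obtain ⟨i, hi, hi2⟩ : ∃ i ∈ L, (i : ZMod 3) = 2 := by
    by_contra! hL
    rcases value_eq_zero_or_two hL with h0 | h0 <;> rw [h0] at h <;> revert h <;> decide
  obtain ⟨p, q, rfl⟩ := List.append_of_mem hi
  rcases i with _ | _ | i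
  · exact absurd hi2 (by decide)
  · exact absurd hi2 (by decide)
  have hi0 : (i : ZMod 3) = 0 := by push_cast at hi2; linear_combination hi2
  refine ⟨⟨p ++ (i + 1) :: q, BlockMove.dropA p q (i + 1), ?_⟩,
    ⟨p ++ i :: q, BlockMove.dropAA p q i, ?_⟩⟩ <;>
  · simp only [value_append_cons, Nat.cast_add, hi0]
    generalize value (p ++ q) = v
    revert v; decide

lemma exists_blockMove_value_add_two {L : List ℕ} (hL : L ≠ []) (h : value L = 2 ∨ value L = 3) :
    ∃ L', BlockMove L L' ∧ value L' = value L + 2 := by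
  by_cases h1 : ∃ i ∈ L, (i : ZMod 3) = 1
  · obtain ⟨i, hi, hi1⟩ := h1
    obtain ⟨p, q, rfl⟩ := List.append_of_mem hi
    rcases i with _ | i
    · exact absurd hi1 (by decide)
    have hi0 : (i : ZMod 3) = 0 := by push_cast at hi1; linear_combination hi1
    refine ⟨p ++ i :: q, BlockMove.dropA p q i, ?_⟩
    simp only [value_append_cons, Nat.cast_add, hi0]
    generalize value (p ++ q) = v
    revert v; decide
  push Not at h1
  match L, hL with
  | [i], _ =>
    have key : ∀ r : ZMod 3, r ≠ 1 → weight r + 2 ≠ 2 ∧ weight r + 2 ≠ 3 := by decide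
    rw [value_cons] at h
    exact absurd h (not_or.2 (key _ (h1 i (by simp))))
  | i :: j :: q, _ =>
    have key : ∀ r s : ZMod 3, r ≠ 1 → s ≠ 1 → weight (r + s) = weight r + weight s + 2 := by
      decide
    refine ⟨(i + j) :: q, BlockMove.dropB [] q i j, ?_⟩
    simp only [value_cons, Nat.cast_add, key _ _ (h1 i (by simp)) (h1 j (by simp))]
    ring

def grundyOf (v : ZMod 4) : ℕ := ![0, 2, 1, 3] v

lemma grundyOf_injective : Function.Injective grundyOf := by decide

-- The shifts `+1`, `+3` (available from odd values) and `+2` (from `2`, `3`) reach every smaller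
-- Grundy value.
lemma lt_grundyOf (v : ZMod 4) (m : ℕ) (hm : m < grundyOf v) :
    ((v = 1 ∨ v = 3) ∧ (grundyOf (v + 1) = m ∨ grundyOf (v + 3) = m)) ∨
      ((v = 2 ∨ v = 3) ∧ grundyOf (v + 2) = m) := by
  revert v m; decide

lemma exists_blockMove_grundyOf_eq {L : List ℕ} {m : ℕ} (hL : L ≠ [])
    (hm : m < grundyOf (value L)) : ∃ L', BlockMove L L' ∧ grundyOf (value L') = m := by
  rcases lt_grundyOf _ m hm with ⟨hodd, h | h⟩ | ⟨h23, h⟩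
  · obtain ⟨L', hmove, hL'⟩ := (exists_blockMove_value_add_of_odd hodd).1
    exact ⟨L', hmove, hL' ▸ h⟩
  · obtain ⟨L', hmove, hL'⟩ := (exists_blockMove_value_add_of_odd hodd).2
    exact ⟨L', hmove, hL' ▸ h⟩
  · obtain ⟨L', hmove, hL'⟩ := exists_blockMove_value_add_two hL h23
    exact ⟨L', hmove, hL' ▸ h⟩

lemma mex_eq_of {T : Set ℕ} {n : ℕ} (hn : n ∉ T) (h : ∀ m < n, m ∈ T) : mex T = n :=
  le_antisymm (Nat.sInf_le hn) (le_csInf ⟨n, hn⟩ fun m hm => not_lt.1 fun hlt => hm (h m hlt))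

lemma IsGrundy.eq_grundyOf_value {g : List AB → ℕ} (hg : IsGrundy Step g) (w : List AB) :
    g w = grundyOf (value (blocks w)) := by
  induction w using (measure List.length).wf.induction with
  | h w ih =>
    have ih' (w' : List AB) (hw' : Step w w') : g w' = grundyOf (value (blocks w')) :=
      ih w' hw'.length_lt
    rw [hg w]
    refine mex_eq_of ?_ fun m hm => ?_
    · rintro ⟨w', hw', hgw'⟩
      rw [ih' w' hw'] at hgw'
      exact hw'.blockMove.value_ne (grundyOf_injective hgw')
    · obtain ⟨L', hmove, hL'⟩ := exists_blockMove_grundyOf_eq (blocks_ne_nil w) hm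
      obtain ⟨w', hw', rfl⟩ := hmove.exists_step
      exact ⟨w', hw', (ih' w' hw').trans hL'⟩

theorem stmt10 (g : List AB → ℕ) (hg : IsGrundy Step g) :
    ∀ w : List AB,
      (S w = 0 → g w = 0) ∧ (S w = 2 → g w = 1) ∧
      (S w = 1 → g w = 2) ∧ (S w = 3 → g w = 3) := by
  intro w
  have h := hg.eq_grundyOf_value w
  rw [← natCast_S] at h
  refine ⟨?_, ?_, ?_, ?_⟩ <;> intro hS <;> rw [h, hS] <;> rfl
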